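/- Let n ≥ 2, let a_1,…,a_n and k be positive integers. Then the chromatic polynomial of the clique-theta graph T(1,(a_1),…,(a_n),k), in which every internal clique-path tuple has length one, satisfies P(X) = (X)_{a_n+k} · ∏_{i=1}^{n−1}(X−k−1)_{a_i−1} · [k·(X−k)^{n−1} + ∏_{i=1}^{n}(X−a_i−k)]. -/

import Mathlib

open Polynomial

/-- `P` is the chromatic polynomial of `G`: for every natural number `q`, evaluating `P`
at `q` gives the number of proper `q`-colourings of `G`. -/
def IsChromaticPoly {V : Type} (G : SimpleGraph V) (P : Polynomial ℤ) : Prop :=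
  ∀ q : ℕ, P.eval (q : ℤ) = Nat.card (G.Coloring (Fin q))

/-- The falling-factorial polynomial `(Y)_m = Y (Y-1) ⋯ (Y-m+1)`. -/
noncomputable def fallPoly (Y : Polynomial ℤ) (m : ℕ) : Polynomial ℤ :=
  ∏ t ∈ Finset.range m, (Y - C (t : ℤ))

/-- Vertices of the clique-theta graph `T(j, S_1, …, S_n, k)`: a vertex of the initial
`j`-clique, a vertex of the `l`-th internal clique of the `i`-th clique-path, or a vertex
of the terminal `k`-clique. -/
abbrev CliqueThetaVertex (j : ℕ) {n : ℕ} (S : Fin n → List ℕ) (k : ℕ) : Type :=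
  Fin j ⊕ ((Σ i : Fin n, Σ l : Fin (S i).length, Fin ((S i).get l)) ⊕ Fin k)

/-- One-directional adjacency relation for a clique-theta graph: same clique, or
consecutive cliques along one of the clique-paths. -/
def cliqueThetaRel (j : ℕ) {n : ℕ} (S : Fin n → List ℕ) (k : ℕ) :
    CliqueThetaVertex j S k → CliqueThetaVertex j S k → Prop
  | Sum.inl _, Sum.inl _ => True
  | Sum.inl _, Sum.inr (Sum.inl ⟨_, l, _⟩) => l.val = 0
  | Sum.inr (Sum.inl ⟨i, l, _⟩), Sum.inr (Sum.inr _) => l.val + 1 = (S i).length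
  | Sum.inr (Sum.inr _), Sum.inr (Sum.inr _) => True
  | Sum.inr (Sum.inl ⟨i, l, _⟩), Sum.inr (Sum.inl ⟨i', l', _⟩) =>
      i.val = i'.val ∧ (l.val = l'.val ∨ l.val + 1 = l'.val)
  | _, _ => False

/-- The clique-theta graph `T(j, S_1, …, S_n, k)`, obtained from the clique-paths
`L(j, S_i, k)`, `1 ≤ i ≤ n`, by identifying their initial `j`-cliques into a single
`j`-clique and their terminal `k`-cliques into a single `k`-clique. -/
def cliqueThetaGraph (j : ℕ) {n : ℕ} (S : Fin n → List ℕ) (k : ℕ) :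
    SimpleGraph (CliqueThetaVertex j S k) where
  Adj x y := x ≠ y ∧ (cliqueThetaRel j S k x y ∨ cliqueThetaRel j S k y x)
  symm := ⟨fun x y h => ⟨h.1.symm, h.2.symm⟩⟩
  loopless := ⟨fun x h => h.1 rfl⟩

/-! A proper `q`-colouring of `T(1,(a_1),…,(a_n),k)` consists of an injective colouring of the
terminal `k`-clique, a colour `c` of the initial vertex, and for each `i` an injective colouring
of the `i`-th inner clique by the colours left free by `c` and the terminal clique. There are
`q - k` free colours if `c` is one of the terminal colours and `q - k - 1` otherwise, so there are
`(q)_k [k ∏ (q-k)_{a_i} + (q-k) ∏ (q-k-1)_{a_i}]` colourings. Writing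
`(X-k)_{a_i} = (X-k) (X-k-1)_{a_i-1}` and `(X-k-1)_{a_i} = (X-k-1)_{a_i-1} (X-a_i-k)` and pulling
out the common factor `(X)_k (X-k) ∏ (X-k-1)_{a_i-1}` gives the stated form. -/

theorem Polynomial.eq_of_eval_natCast_eq {R : Type*} [CommRing R] [IsDomain R] [CharZero R]
    {p q : R[X]} (N : ℕ) (h : ∀ m, N ≤ m → p.eval (m : R) = q.eval (m : R)) : p = q := by
  refine eq_of_infinite_eval_eq p q (Set.infinite_of_injective_forall_mem
    (f := fun m : ℕ => ((N + m : ℕ) : R)) ?_ fun m => h _ (Nat.le_add_right N m))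
  exact Nat.cast_injective.comp (add_right_injective N)

section fallPoly

variable (Y : ℤ[X]) (m l : ℕ)

theorem fallPoly_succ : fallPoly Y (m + 1) = fallPoly Y m * (Y - C (m : ℤ)) :=
  Finset.prod_range_succ _ m

theorem fallPoly_succ' : fallPoly Y (m + 1) = Y * fallPoly (Y - 1) m := by
  simp only [fallPoly, Finset.prod_range_succ', Nat.cast_zero, C_0, sub_zero, Nat.cast_succ,
    C_add, C_1, sub_add_eq_sub_sub_swap]
  exact mul_comm _ _

theorem fallPoly_add : fallPoly Y (m + l) = fallPoly Y m * fallPoly (Y - C (m : ℤ)) l := by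
  simp only [fallPoly, Finset.prod_range_add, Nat.cast_add, C_add, sub_sub]

theorem eval_fallPoly (x : ℤ) : (fallPoly Y m).eval x = (descPochhammer ℤ m).eval (Y.eval x) := by
  simp [fallPoly, eval_prod, descPochhammer_eval_eq_prod_range]

theorem eval_fallPoly_X_sub_natCast {c q : ℕ} (h : c ≤ q) :
    (fallPoly (X - C (c : ℤ)) m).eval (q : ℤ) = (q - c).descFactorial m := by
  rw [eval_fallPoly, eval_sub, eval_X, eval_C, ← Nat.cast_sub h,
    descPochhammer_eval_eq_descFactorial]

end fallPoly

section SingletonTheta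

variable {n : ℕ} (a : Fin n → ℕ) (k : ℕ)

abbrev singletonThetaGraph : SimpleGraph (CliqueThetaVertex 1 (fun i => [a i]) k) :=
  cliqueThetaGraph 1 (fun i => [a i]) k

namespace singletonThetaGraph

def initial : CliqueThetaVertex 1 (fun i => [a i]) k := Sum.inl 0

def inner (i : Fin n) (v : Fin (a i)) : CliqueThetaVertex 1 (fun i => [a i]) k :=
  Sum.inr (Sum.inl ⟨i, ⟨0, Nat.one_pos⟩, v⟩)

def terminal (t : Fin k) : CliqueThetaVertex 1 (fun i => [a i]) k := Sum.inr (Sum.inr t)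

variable {a k}

theorem adj_initial_inner (i : Fin n) (v : Fin (a i)) :
    (singletonThetaGraph a k).Adj (initial a k) (inner a k i v) :=
  ⟨by simp [initial, inner], Or.inl rfl⟩

theorem adj_inner_inner (i : Fin n) {v w : Fin (a i)} (h : v ≠ w) :
    (singletonThetaGraph a k).Adj (inner a k i v) (inner a k i w) :=
  ⟨by simpa [inner] using h, Or.inl ⟨rfl, Or.inl rfl⟩⟩

theorem adj_inner_terminal (i : Fin n) (v : Fin (a i)) (t : Fin k) :
    (singletonThetaGraph a k).Adj (inner a k i v) (terminal a k t) :=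
  ⟨by simp [inner, terminal], Or.inl rfl⟩

theorem adj_terminal_terminal {s t : Fin k} (h : s ≠ t) :
    (singletonThetaGraph a k).Adj (terminal a k s) (terminal a k t) :=
  ⟨by simpa [terminal] using h, Or.inl trivial⟩

variable {q : ℕ}

def freeColors (g : Fin k ↪ Fin q) (c : Fin q) : Finset (Fin q) :=
  (insert c (Finset.univ.map g))ᶜ

theorem mem_freeColors {g : Fin k ↪ Fin q} {c x : Fin q} :
    x ∈ freeColors g c ↔ x ≠ c ∧ ∀ t, g t ≠ x := by
  simp [freeColors]

variable (a k q) in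
def ColoringData : Type :=
  Σ gc : (Fin k ↪ Fin q) × Fin q, ∀ i, Fin (a i) ↪ freeColors gc.1 gc.2

def extendColoring (g : Fin k ↪ Fin q) (c : Fin q) (e : ∀ i, Fin (a i) ↪ freeColors g c) :
    CliqueThetaVertex 1 (fun i => [a i]) k → Fin q
  | Sum.inl _ => c
  | Sum.inr (Sum.inl ⟨i, ⟨0, _⟩, v⟩) => e i v
  | Sum.inr (Sum.inl ⟨_, ⟨_ + 1, h⟩, _⟩) => absurd h (by simp)
  | Sum.inr (Sum.inr t) => g t

theorem not_adj_initial_terminal (t : Fin k) :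
    ¬(singletonThetaGraph a k).Adj (initial a k) (terminal a k t) := by
  simp [initial, terminal, cliqueThetaGraph, cliqueThetaRel]

theorem not_adj_inner_inner {i j : Fin n} (h : i ≠ j) (v : Fin (a i)) (w : Fin (a j)) :
    ¬(singletonThetaGraph a k).Adj (inner a k i v) (inner a k j w) := by
  simp [inner, cliqueThetaGraph, cliqueThetaRel, Fin.val_inj, h, Ne.symm h]

@[elab_as_elim]
theorem vertex_cases {motive : CliqueThetaVertex 1 (fun i => [a i]) k → Prop}
    (initial : motive (initial a k)) (inner : ∀ i v, motive (inner a k i v))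
    (terminal : ∀ t, motive (terminal a k t)) (x : CliqueThetaVertex 1 (fun i => [a i]) k) :
    motive x := by
  rcases x with u | ⟨i, ⟨_ | _, hl⟩, v⟩ | t
  · rwa [Fin.fin_one_eq_zero u]
  · exact inner i v
  · exact absurd hl (by simp)
  · exact terminal t

theorem extendColoring_ne_of_adj (g : Fin k ↪ Fin q) (c : Fin q)
    (e : ∀ i, Fin (a i) ↪ freeColors g c) {x y : CliqueThetaVertex 1 (fun i => [a i]) k}
    (h : (singletonThetaGraph a k).Adj x y) : extendColoring g c e x ≠ extendColoring g c e y := by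
  have hfree (i : Fin n) (v : Fin (a i)) : (e i v : Fin q) ≠ c ∧ ∀ t, g t ≠ e i v :=
    mem_freeColors.1 (e i v).2
  induction x using vertex_cases with
  | initial =>
    induction y using vertex_cases with
    | initial => exact absurd h (SimpleGraph.irrefl _)
    | inner j w => exact (hfree j w).1.symm
    | terminal t => exact absurd h (not_adj_initial_terminal t)
  | inner i v =>
    induction y using vertex_cases with
    | initial => exact (hfree i v).1
    | inner j w =>
      obtain rfl | hij := eq_or_ne i j
      · exact fun hvw => h.ne (by rw [(e i).injective (Subtype.ext hvw)])
      · exact absurd h (not_adj_inner_inner hij v w)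
    | terminal t => exact ((hfree i v).2 t).symm
  | terminal s =>
    induction y using vertex_cases with
    | initial => exact absurd h.symm (not_adj_initial_terminal s)
    | inner j w => exact (hfree j w).2 s
    | terminal t => exact fun hst => h.ne (by rw [g.injective hst])

variable (a k q) in
def coloringEquiv : (singletonThetaGraph a k).Coloring (Fin q) ≃ ColoringData a k q where
  toFun C :=
    ⟨(⟨fun t => C (terminal a k t), fun s t hst =>
        by_contra fun h => C.valid (adj_terminal_terminal h) hst⟩, C (initial a k)),
      fun i => ⟨fun v => ⟨C (inner a k i v), mem_freeColors.2 ⟨(C.valid (adj_initial_inner i v)).symm,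
          fun t => (C.valid (adj_inner_terminal i v t)).symm⟩⟩,
        fun v w hvw => by_contra fun h => C.valid (adj_inner_inner i h) (congrArg Subtype.val hvw)⟩⟩
  invFun d := .mk (extendColoring d.1.1 d.1.2 d.2) (extendColoring_ne_of_adj _ _ _)
  left_inv C := by
    ext x
    induction x using vertex_cases <;> rfl
  right_inv _ := rfl

theorem card_freeColors_of_mem {g : Fin k ↪ Fin q} {c : Fin q} (h : c ∈ Finset.univ.map g) :
    (freeColors g c).card = q - k := by
  rw [freeColors, Finset.insert_eq_of_mem h, Finset.card_compl, Finset.card_map]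
  simp

theorem card_freeColors_of_notMem {g : Fin k ↪ Fin q} {c : Fin q} (h : c ∉ Finset.univ.map g) :
    (freeColors g c).card = q - k - 1 := by
  rw [freeColors, Finset.card_compl, Finset.card_insert_of_notMem h, Finset.card_map]
  simp [Nat.sub_sub]

variable (a k q) in
theorem card_coloringData : Nat.card (ColoringData a k q) = q.descFactorial k *
    (k * ∏ i, (q - k).descFactorial (a i) + (q - k) * ∏ i, (q - k - 1).descFactorial (a i)) := by
  have hfiber (g : Fin k ↪ Fin q) (c : Fin q) : Nat.card (∀ i, Fin (a i) ↪ freeColors g c) =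
      ∏ i, (freeColors g c).card.descFactorial (a i) := by
    simp [Fintype.card_embedding_eq]
  have hsum (g : Fin k ↪ Fin q) : ∑ c, ∏ i, (freeColors g c).card.descFactorial (a i) =
      k * ∏ i, (q - k).descFactorial (a i) + (q - k) * ∏ i, (q - k - 1).descFactorial (a i) := by
    have hin : ∀ c ∈ Finset.univ.map g, ∏ i, (freeColors g c).card.descFactorial (a i) =
        ∏ i, (q - k).descFactorial (a i) := fun c hc => by rw [card_freeColors_of_mem hc]
    have hout : ∀ c ∈ (Finset.univ.map g)ᶜ, ∏ i, (freeColors g c).card.descFactorial (a i) =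
        ∏ i, (q - k - 1).descFactorial (a i) := fun c hc => by
      rw [card_freeColors_of_notMem (Finset.mem_compl.1 hc)]
    rw [← Finset.sum_add_sum_compl (Finset.univ.map g), Finset.sum_congr rfl hin,
      Finset.sum_congr rfl hout]
    simp [Finset.card_compl]
  simp only [ColoringData, Nat.card_sigma, hfiber, Fintype.sum_prod_type, hsum]
  simp [Fintype.card_embedding_eq]

variable (a k q) in
theorem card_coloring : Nat.card ((singletonThetaGraph a k).Coloring (Fin q)) =
    q.descFactorial k * (k * ∏ i, (q - k).descFactorial (a i) +
      (q - k) * ∏ i, (q - k - 1).descFactorial (a i)) := by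
  rw [Nat.card_congr (coloringEquiv a k q), card_coloringData]

end singletonThetaGraph

noncomputable def singletonThetaChromaticPoly : ℤ[X] :=
  fallPoly X k * (C (k : ℤ) * ∏ i, fallPoly (X - C (k : ℤ)) (a i) +
    (X - C (k : ℤ)) * ∏ i, fallPoly (X - C ((k : ℤ) + 1)) (a i))

variable {a k}

theorem eval_singletonThetaChromaticPoly {q : ℕ} (hq : k + 1 ≤ q) :
    (singletonThetaChromaticPoly a k).eval (q : ℤ) =
      ((q.descFactorial k * (k * ∏ i, (q - k).descFactorial (a i) +
        (q - k) * ∏ i, (q - k - 1).descFactorial (a i)) : ℕ) : ℤ) := by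
  have hX : (fallPoly X k).eval (q : ℤ) = q.descFactorial k := by
    rw [eval_fallPoly, eval_X, descPochhammer_eval_eq_descFactorial]
  have hcast : C ((k : ℤ) + 1) = C ((k + 1 : ℕ) : ℤ) := by push_cast; rfl
  simp only [singletonThetaChromaticPoly, hcast, eval_mul, eval_add, eval_prod, eval_C, eval_sub,
    eval_X, hX, eval_fallPoly_X_sub_natCast _ (by omega : k ≤ q),
    eval_fallPoly_X_sub_natCast _ hq, Nat.sub_sub]
  push_cast [Nat.cast_sub (by omega : k ≤ q)]
  rfl

theorem singletonThetaChromaticPoly_eq {m₀ : ℕ} {a : Fin (m₀ + 2) → ℕ} (ha : ∀ i, 0 < a i) :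
    singletonThetaChromaticPoly a k = fallPoly X (a (Fin.last (m₀ + 1)) + k)
        * (∏ i ∈ Finset.univ.erase (Fin.last (m₀ + 1)),
            fallPoly (X - C ((k : ℤ) + 1)) (a i - 1))
        * (C (k : ℤ) * (X - C (k : ℤ)) ^ (m₀ + 1)
            + ∏ i : Fin (m₀ + 2), (X - C ((a i : ℤ) + (k : ℤ)))) := by
  set D := fun i => fallPoly (X - C ((k : ℤ) + 1)) (a i - 1)
  have hsucc (i : Fin (m₀ + 2)) : a i = a i - 1 + 1 := (Nat.sub_add_cancel (ha i)).symm
  have hfront (i : Fin (m₀ + 2)) : fallPoly (X - C (k : ℤ)) (a i) = (X - C (k : ℤ)) * D i := by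
    rw [hsucc i, fallPoly_succ', sub_sub, ← C_1, ← C_add]
  have hback (i : Fin (m₀ + 2)) :
      fallPoly (X - C ((k : ℤ) + 1)) (a i) = D i * (X - C ((a i : ℤ) + k)) := by
    conv_lhs => rw [hsucc i, fallPoly_succ, sub_sub, ← C_add, Nat.cast_sub (ha i)]
    congr 3
    push_cast
    ring
  have hlast : fallPoly X (a (Fin.last (m₀ + 1)) + k) =
      fallPoly X k * ((X - C (k : ℤ)) * D (Fin.last (m₀ + 1))) := by
    rw [add_comm, fallPoly_add, hfront]
  rw [singletonThetaChromaticPoly, hlast]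
  simp only [hfront, hback, Finset.prod_mul_distrib, Finset.prod_const, Finset.card_univ,
    Fintype.card_fin]
  rw [← Finset.mul_prod_erase Finset.univ D (Finset.mem_univ (Fin.last (m₀ + 1)))]
  ring

end SingletonTheta

theorem chromatic_poly_of_clique_theta_singleton_general
    (m₀ : ℕ) (a : Fin (m₀ + 2) → ℕ) (ha : ∀ i, 0 < a i) (k : ℕ)
    (P : Polynomial ℤ)
    (hP : IsChromaticPoly (cliqueThetaGraph 1 (fun i => [a i]) k) P) :
    P = fallPoly X (a (Fin.last (m₀ + 1)) + k)
        * (∏ i ∈ Finset.univ.erase (Fin.last (m₀ + 1)),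
            fallPoly (X - C ((k : ℤ) + 1)) (a i - 1))
        * (C (k : ℤ) * (X - C (k : ℤ)) ^ (m₀ + 1)
            + ∏ i : Fin (m₀ + 2), (X - C ((a i : ℤ) + (k : ℤ)))) := by
  rw [← singletonThetaChromaticPoly_eq ha]
  refine Polynomial.eq_of_eval_natCast_eq (k + 1) fun q hq => ?_
  rw [hP q, singletonThetaGraph.card_coloring, eval_singletonThetaChromaticPoly hq]

/-- The chromatic polynomial of the clique-theta graph
`T(1,(a_1),…,(a_n),k)` with all internal tuples of length one (`n = m₀ + 2 ≥ 2`):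
`P = (X)_{a_n+k} · ∏_{i=1}^{n-1} (X-k-1)_{a_i-1} · [k(X-k)^{n-1} + ∏_{i=1}^n (X-a_i-k)]`. -/
theorem chromatic_poly_of_clique_theta_singleton
    (m₀ : ℕ) (a : Fin (m₀ + 2) → ℕ) (ha : ∀ i, 0 < a i) (k : ℕ) (hk : 0 < k)
    (P : Polynomial ℤ)
    (hP : IsChromaticPoly (cliqueThetaGraph 1 (fun i => [a i]) k) P) :
    P = fallPoly X (a (Fin.last (m₀ + 1)) + k)
        * (∏ i ∈ Finset.univ.erase (Fin.last (m₀ + 1)),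
            fallPoly (X - C ((k : ℤ) + 1)) (a i - 1))
        * (C (k : ℤ) * (X - C (k : ℤ)) ^ (m₀ + 1)
            + ∏ i : Fin (m₀ + 2), (X - C ((a i : ℤ) + (k : ℤ)))) :=
  chromatic_poly_of_clique_theta_singleton_general m₀ a ha k P hP
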